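/- arXiv:1112.3932 — 2 statements merged into one kernel-verified Lean document; each statement's English description precedes it below -/
import Mathlib

section
/- For every natural number n, there exists a sign assignment for the n-dimensional cube C(n); that is, there exists a function s assigning to each edge (v, i) of C(n) an element of ZMod 2 such that for every square of C(n), determined by a vertex v and distinct indices i, j with v i = 0 and v j = 0, one has s(v, i) + s(v + e_j, i) + s(v, j) + s(v + e_i, j) = 1 in ZMod 2. -/
/-! The Koszul sign `s(v, i) = ∑_{k < i} v k` works: moving from `v` to `v + e_j` changes
`s(·, i)` by `1` exactly when `j < i`, and for `i ≠ j` exactly one of `j < i`, `i < j` holds,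
so the four boundary values of every square add up to `1`. -/

open Finset

section KoszulSign

variable {ι M : Type*} [LinearOrder ι] [LocallyFiniteOrderBot ι] [AddCommMonoid M]

def koszulSign (v : ι → M) (i : ι) : M :=
  ∑ k ∈ Iio i, v k

theorem koszulSign_add_single (v : ι → M) (i j : ι) (x : M) :
    koszulSign (v + Pi.single j x) i = koszulSign v i + if j < i then x else 0 := by
  simp only [koszulSign, Pi.add_apply, sum_add_distrib, sum_pi_single', mem_Iio]

theorem koszulSign_square (v : ι → ZMod 2) {i j : ι} (hij : i ≠ j) :
    koszulSign v i + koszulSign (v + Pi.single j 1) i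
      + koszulSign v j + koszulSign (v + Pi.single i 1) j = 1 := by
  rw [koszulSign_add_single, koszulSign_add_single]
  generalize koszulSign v i = a, koszulSign v j = b
  rcases hij.lt_or_gt with h | h
  · rw [if_neg h.asymm, if_pos h]
    linear_combination (a + b) * ZMod.natCast_self 2
  · rw [if_pos h, if_neg h.asymm]
    linear_combination (a + b) * ZMod.natCast_self 2

end KoszulSign

/-- For every `n` there exists a sign assignment for the `n`-dimensional cube `C(n)`:
a `ZMod 2`-valued 1-cochain `s` (a function on edges `(v, i)` with `v i = 0`) such that
on every square of `C(n)`, determined by a vertex `v` and distinct indices `i`, `j`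
with `v i = 0` and `v j = 0`, the sum of the values of `s` on the four boundary edges
`(v, i)`, `(v + e_j, i)`, `(v, j)`, `(v + e_i, j)` is `1`. -/
theorem exists_sign_assignment (n : ℕ) :
    ∃ s : (Fin n → ZMod 2) → Fin n → ZMod 2,
      ∀ (v : Fin n → ZMod 2) (i j : Fin n), i ≠ j → v i = 0 → v j = 0 →
        s v i + s (v + Pi.single j 1) i + s v j + s (v + Pi.single i 1) j = 1 :=
  ⟨koszulSign, fun v _ _ hij _ _ => koszulSign_square v hij⟩
end

section
/- Any two sign assignments for the n-dimensional cube are gauge equivalent: if s and s' are sign assignments for C(n), then there exists a function t : (Fin n → ZMod 2) → ZMod 2 such that s(v, i) + s'(v, i) = t(v) + t(v + e_i) in ZMod 2 for every edge (v, i) of C(n). -/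
/-!
A sign assignment has coboundary the constant cochain `1` on squares, so the sum of two of them
is a 1-cocycle, and it suffices that every 1-cocycle on the cube is a coboundary. A cocycle `f`
is integrated along the monotone path from `0` to `v` that flips the coordinates of `v` in
increasing order, giving `t v`. Comparing the paths to `v` and `v + e_i`, the steps before `i`
agree, the step `i` contributes `f` on an `i`-edge, and by the square relations each later step
moves that `i`-edge one coordinate closer to `v`; at the end it is the edge `(v, i)`.
-/

namespace Cube

variable {n : ℕ}

def squareSum (f : (Fin n → ZMod 2) → Fin n → ZMod 2) (v : Fin n → ZMod 2) (i j : Fin n) :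
    ZMod 2 :=
  f v i + f (v + Pi.single j 1) i + f v j + f (v + Pi.single i 1) j

def IsCocycle (f : (Fin n → ZMod 2) → Fin n → ZMod 2) : Prop :=
  ∀ (v : Fin n → ZMod 2) (i j : Fin n), i ≠ j → v i = 0 → v j = 0 → squareSum f v i j = 0

lemma isCocycle_add_of_squareSum_eq_one {f g : (Fin n → ZMod 2) → Fin n → ZMod 2}
    (hf : ∀ v i j, i ≠ j → v i = 0 → v j = 0 → squareSum f v i j = 1)
    (hg : ∀ v i j, i ≠ j → v i = 0 → v j = 0 → squareSum g v i j = 1) :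
    IsCocycle (f + g) := by
  intro v i j hij hi hj
  have : squareSum (f + g) v i j = squareSum f v i j + squareSum g v i j := by
    simp only [squareSum, Pi.add_apply]; ring
  rw [this, hf v i j hij hi hj, hg v i j hij hi hj]
  decide

def truncate (v : Fin n → ZMod 2) (m : ℕ) : Fin n → ZMod 2 :=
  fun j => if (j : ℕ) < m then v j else 0

lemma truncate_apply_of_le (v : Fin n → ZMod 2) {m : ℕ} {j : Fin n} (h : m ≤ j) :
    truncate v m j = 0 :=
  if_neg (by omega)

lemma truncate_apply_eq_zero {v : Fin n → ZMod 2} {j : Fin n} (h : v j = 0) (m : ℕ) :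
    truncate v m j = 0 := by
  simp [truncate, h]

lemma truncate_of_le (v : Fin n → ZMod 2) {m : ℕ} (h : n ≤ m) : truncate v m = v :=
  funext fun j => if_pos (by omega)

lemma truncate_succ (v : Fin n → ZMod 2) (k : Fin n) :
    truncate v (k + 1) = truncate v k + Pi.single k (v k) := by
  funext j
  rcases eq_or_ne j k with rfl | hjk
  · simp [truncate]
  · have : (j : ℕ) ≠ k := Fin.val_ne_of_ne hjk
    simp [truncate, hjk, Nat.le_iff_lt_or_eq, this]

lemma truncate_add_single_of_le (v : Fin n → ZMod 2) {m : ℕ} {i : Fin n} (h : m ≤ i) :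
    truncate (v + Pi.single i 1) m = truncate v m := by
  funext j
  rcases eq_or_ne j i with rfl | hji
  · simp [truncate_apply_of_le _ h]
  · simp [truncate, hji]

lemma truncate_add_single_of_lt (v : Fin n → ZMod 2) {m : ℕ} {i : Fin n} (h : (i : ℕ) < m) :
    truncate (v + Pi.single i 1) m = truncate v m + Pi.single i 1 := by
  funext j
  rcases eq_or_ne j i with rfl | hji
  · simp [truncate, h]
  · simp [truncate, hji]

def pathSum (f : (Fin n → ZMod 2) → Fin n → ZMod 2) (v : Fin n → ZMod 2) : ℕ → ZMod 2
  | 0 => 0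
  | m + 1 => pathSum f v m + if h : m < n then v ⟨m, h⟩ * f (truncate v m) ⟨m, h⟩ else 0

lemma pathSum_succ (f : (Fin n → ZMod 2) → Fin n → ZMod 2) (v : Fin n → ZMod 2) (k : Fin n) :
    pathSum f v (k + 1) = pathSum f v k + v k * f (truncate v k) k := by
  simp [pathSum]

lemma pathSum_succ_of_le (f : (Fin n → ZMod 2) → Fin n → ZMod 2) (v : Fin n → ZMod 2) {m : ℕ}
    (h : n ≤ m) : pathSum f v (m + 1) = pathSum f v m := by
  simp [pathSum, Nat.not_lt.mpr h]

lemma pathSum_add_single {f : (Fin n → ZMod 2) → Fin n → ZMod 2} (hf : IsCocycle f)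
    {v : Fin n → ZMod 2} {i : Fin n} (hi : v i = 0) (m : ℕ) :
    pathSum f (v + Pi.single i 1) m + pathSum f v m =
      if (i : ℕ) < m then f (truncate v m) i else 0 := by
  induction m with
  | zero => simp [pathSum]
  | succ m ih =>
    obtain hm | hm := lt_or_ge m n
    swap
    · rw [pathSum_succ_of_le _ _ hm, pathSum_succ_of_le _ _ hm, ih,
        truncate_of_le v hm, truncate_of_le v (by omega), if_pos (by omega), if_pos (by omega)]
    obtain ⟨k, rfl⟩ : ∃ k : Fin n, (k : ℕ) = m := ⟨⟨m, hm⟩, rfl⟩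
    rw [pathSum_succ, pathSum_succ, truncate_succ]
    set u := truncate v k
    rcases lt_trichotomy (i : ℕ) k with hik | hik | hik
    · have hki : k ≠ i := Fin.ne_of_val_ne (by omega)
      rw [if_pos hik] at ih
      rw [if_pos (by omega), truncate_add_single_of_lt v hik, Pi.add_apply,
        Pi.single_eq_of_ne hki, add_zero]
      have hsq := hf u i k (Ne.symm hki) (truncate_apply_eq_zero hi _)
        (truncate_apply_of_le v le_rfl)
      simp only [squareSum] at hsq
      -- the square spanned by `e_i, e_k` at `u` trades the change of the `k`-th path step for
      -- the change of the `i`-edge from `u` to `u + v k • e_k`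
      rcases (by decide : ∀ x : ZMod 2, x = 0 ∨ x = 1) (v k) with hvk | hvk <;>
        simp only [hvk, Pi.single_zero, add_zero, zero_mul, one_mul] <;> grind
    · obtain rfl : i = k := Fin.ext hik
      rw [if_neg (lt_irrefl _)] at ih
      simp only [Pi.add_apply, hi, Pi.single_eq_same, zero_add, one_mul, zero_mul, add_zero,
        truncate_add_single_of_le v le_rfl, Pi.single_zero, Nat.lt_succ_self, if_true]
      grind
    · rw [if_neg (by omega)] at ih
      rw [if_neg (by omega), truncate_add_single_of_le v hik.le, Pi.add_apply,
        Pi.single_eq_of_ne (Fin.ne_of_val_ne (by omega)), add_zero]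
      grind

lemma IsCocycle.exists_eq_coboundary {f : (Fin n → ZMod 2) → Fin n → ZMod 2} (hf : IsCocycle f) :
    ∃ t : (Fin n → ZMod 2) → ZMod 2,
      ∀ (v : Fin n → ZMod 2) (i : Fin n), v i = 0 → f v i = t v + t (v + Pi.single i 1) := by
  refine ⟨fun v => pathSum f v n, fun v i hi => ?_⟩
  have h := pathSum_add_single hf hi n
  rw [if_pos i.isLt, truncate_of_le v le_rfl] at h
  rw [← h, add_comm]

end Cube

/-- Any two sign assignments for the `n`-dimensional cube are gauge equivalent:
their difference is the coboundary of a 0-cochain `t`. -/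
theorem sign_assignments_gauge_equivalent (n : ℕ)
    (s s' : (Fin n → ZMod 2) → Fin n → ZMod 2)
    (hs : ∀ (v : Fin n → ZMod 2) (i j : Fin n), i ≠ j → v i = 0 → v j = 0 →
      s v i + s (v + Pi.single j 1) i + s v j + s (v + Pi.single i 1) j = 1)
    (hs' : ∀ (v : Fin n → ZMod 2) (i j : Fin n), i ≠ j → v i = 0 → v j = 0 →
      s' v i + s' (v + Pi.single j 1) i + s' v j + s' (v + Pi.single i 1) j = 1) :
    ∃ t : (Fin n → ZMod 2) → ZMod 2,
      ∀ (v : Fin n → ZMod 2) (i : Fin n), v i = 0 →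
        s v i + s' v i = t v + t (v + Pi.single i 1) :=
  (Cube.isCocycle_add_of_squareSum_eq_one hs hs').exists_eq_coboundary
end
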